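/- Every finitely generated subgroup of GL(n, ℂ) is residually finite. -/

import Mathlib

/-!
Mal'cev's argument. The entries of the generators and of their inverses generate a finitely
generated subring `S ⊆ ℂ`, and the group embeds into `GL n S`. A field that is finitely generated
as a ring is finite over `ℤ`, hence of positive characteristic and finite; and `S` is a reduced
Jacobson ring, so a nonzero entry of `g - 1` survives modulo some maximal ideal `m`. Reduction
modulo `m` then separates `g` from `1` in the finite group `GL n (S ⧸ m)`.
-/

theorem Int.jacobson_bot_eq_bot : Ideal.jacobson (⊥ : Ideal ℤ) = ⊥ := by
  refine le_antisymm (fun x hx => ?_) Ideal.le_jacobson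
  rw [Ideal.mem_jacobson_bot] at hx
  have h1 := Int.isUnit_iff.mp (hx 1)
  have h2 := Int.isUnit_iff.mp (hx (-1))
  rw [Ideal.mem_bot]
  omega

theorem isJacobsonRing_of_jacobson_bot_eq_bot {R : Type*} [CommRing R] [Ring.DimensionLEOne R]
    (h : Ideal.jacobson (⊥ : Ideal R) = ⊥) : IsJacobsonRing R := by
  rw [isJacobsonRing_iff_prime_eq]
  intro P hP
  rcases eq_or_ne P ⊥ with rfl | hP_ne_bot
  · exact h
  · have := hP.isMaximal hP_ne_bot
    exact Ideal.jacobson_eq_self_of_isMaximal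

instance Int.isJacobsonRing : IsJacobsonRing ℤ :=
  isJacobsonRing_of_jacobson_bot_eq_bot Int.jacobson_bot_eq_bot

theorem finite_of_moduleFinite_int (K : Type*) [Field K] [Module.Finite ℤ K] : Finite K := by
  have hchar : (ringChar K : ℤ) ≠ 0 := by
    intro h0
    have : CharZero K := (CharP.ringChar_zero_iff_CharZero K).mp (Int.ofNat_eq_zero.mp h0)
    exact Int.not_isField <|
      isField_of_isIntegral_of_isField Int.cast_injective (Field.toIsField K)
  refine Module.finite_of_fg_torsion K fun x =>
    ⟨⟨ringChar K, mem_nonZeroDivisors_of_ne_zero hchar⟩, ?_⟩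
  simp

theorem Ideal.finite_quotient_of_finiteType_int {R : Type*} [CommRing R] [Algebra.FiniteType ℤ R]
    (m : Ideal R) [m.IsMaximal] : Finite (R ⧸ m) :=
  letI := Ideal.Quotient.field m
  haveI : Algebra.FiniteType ℤ (R ⧸ m) :=
    .of_surjective (Ideal.Quotient.mkₐ ℤ m) (Ideal.Quotient.mkₐ_surjective ℤ m)
  haveI := finite_of_finite_type_of_isJacobsonRing ℤ (R ⧸ m)
  finite_of_moduleFinite_int (R ⧸ m)

theorem Ideal.exists_isMaximal_notMem_of_ne_zero {R : Type*} [CommRing R] [IsJacobsonRing R]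
    [IsReduced R] {x : R} (hx : x ≠ 0) : ∃ m : Ideal R, m.IsMaximal ∧ x ∉ m := by
  have hjac : Ideal.jacobson (⊥ : Ideal R) = ⊥ := by
    rw [← Ideal.radical_eq_jacobson]
    exact nilradical_eq_zero R
  have hx' : x ∉ Ideal.jacobson (⊥ : Ideal R) := by simpa [hjac] using hx
  simp only [Ideal.jacobson, Ideal.mem_sInf, not_forall] at hx'
  obtain ⟨m, ⟨-, hm⟩, hxm⟩ := hx'
  exact ⟨m, hm, hxm⟩

universe u

namespace Group

variable {G : Type u} {G' : Type*} [Group G] [Group G']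

theorem ResiduallyFinite.of_injective [ResiduallyFinite G'] (f : G →* G')
    (hf : Function.Injective f) : ResiduallyFinite G := by
  rw [residuallyFinite_iff_exists_finiteIndexNormalSubgroup]
  intro g hg
  obtain ⟨K, hK⟩ := exists_finiteIndexNormalSubgroup_notMem (f g) ((map_ne_one_iff f hf).mpr hg)
  exact ⟨K.comap f, hK⟩

theorem ResiduallyFinite.exists_finite_monoidHom [ResiduallyFinite G] (g : G) (hg : g ≠ 1) :
    ∃ (F : Type u) (_ : Group F) (_ : Finite F) (φ : G →* F), φ g ≠ 1 := by
  obtain ⟨K, hK⟩ := exists_finiteIndexNormalSubgroup_notMem g hg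
  exact ⟨G ⧸ K.toSubgroup, inferInstance, Subgroup.finite_quotient_of_finiteIndex,
    QuotientGroup.mk' _, by rwa [ne_eq, QuotientGroup.mk'_apply, QuotientGroup.eq_one_iff]⟩

end Group

theorem Units.mem_range_map_of_val_mem_mrange {M N : Type*} [Monoid M] [Monoid N] {f : M →* N}
    (hf : Function.Injective f) {u : Nˣ} (hu : (u : N) ∈ MonoidHom.mrange f)
    (hu_inv : ((u⁻¹ : Nˣ) : N) ∈ MonoidHom.mrange f) : u ∈ (Units.map f).range := by
  obtain ⟨a, ha⟩ := hu
  obtain ⟨b, hb⟩ := hu_inv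
  have hab : a * b = 1 := hf (by simp [ha, hb])
  have hba : b * a = 1 := hf (by simp [ha, hb])
  exact ⟨⟨a, b, hab, hba⟩, Units.ext ha⟩

namespace Matrix.GeneralLinearGroup

variable {ι : Type*} [Fintype ι] [DecidableEq ι]

theorem mem_range_map_val {R A : Type*} [CommRing R] [CommRing A] [Algebra R A]
    {S : Subalgebra R A} {g : GL ι A} (hg : ∀ i j, g i j ∈ S) (hg_inv : ∀ i j, g⁻¹ i j ∈ S) :
    g ∈ (map (S.val : S →+* A)).range :=
  Units.mem_range_map_of_val_mem_mrange (Matrix.map_injective Subtype.val_injective)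
    ⟨of fun i j => ⟨g i j, hg i j⟩, rfl⟩ ⟨of fun i j => ⟨g⁻¹ i j, hg_inv i j⟩, rfl⟩

theorem exists_fg_le_range_map {A : Type*} [CommRing A] {H : Subgroup (GL ι A)} (hH : H.FG) :
    ∃ S : Subalgebra ℤ A, S.FG ∧ H ≤ (map (S.val : S →+* A)).range := by
  obtain ⟨T, rfl⟩ := hH
  let entries : Set A := ⋃ g ∈ T, Set.range (fun p : ι × ι => g p.1 p.2) ∪
    Set.range (fun p : ι × ι => g⁻¹ p.1 p.2)
  have h_fin : entries.Finite := T.finite_toSet.biUnion fun g _ =>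
    (Set.finite_range _).union (Set.finite_range _)
  refine ⟨Algebra.adjoin ℤ entries, Subalgebra.fg_def.mpr ⟨entries, h_fin, rfl⟩,
    (Subgroup.closure_le _).mpr fun g hg => mem_range_map_val (fun i j => ?_) (fun i j => ?_)⟩
  · exact Algebra.subset_adjoin (Set.mem_biUnion hg (Or.inl ⟨(i, j), rfl⟩))
  · exact Algebra.subset_adjoin (Set.mem_biUnion hg (Or.inr ⟨(i, j), rfl⟩))

theorem residuallyFinite_of_finiteType {R : Type*} [CommRing R] [IsReduced R]
    [Algebra.FiniteType ℤ R] : Group.ResiduallyFinite (GL ι R) := by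
  have : IsJacobsonRing R := isJacobsonRing_of_finiteType (A := ℤ)
  refine Group.residuallyFinite_of_forall_exists_finite_monoidHom fun g hg => ?_
  obtain ⟨i, j, hij⟩ : ∃ i j, g i j ≠ (1 : Matrix ι ι R) i j := by
    by_contra! h
    exact hg (Units.ext (Matrix.ext h))
  obtain ⟨m, hm, hm_notMem⟩ := Ideal.exists_isMaximal_notMem_of_ne_zero (sub_ne_zero.mpr hij)
  have := Ideal.finite_quotient_of_finiteType_int m
  refine ⟨GL ι (R ⧸ m), inferInstance, inferInstance, map (Ideal.Quotient.mk m),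
    fun h => hm_notMem ?_⟩
  rw [← Ideal.Quotient.eq_zero_iff_mem, map_sub, sub_eq_zero]
  simpa [one_apply, apply_ite (Ideal.Quotient.mk m)] using
    congrArg (fun g : GL ι (R ⧸ m) => g i j) h

theorem residuallyFinite_of_fg {A : Type*} [CommRing A] [IsReduced A] {H : Subgroup (GL ι A)}
    (hH : H.FG) : Group.ResiduallyFinite H := by
  obtain ⟨S, hS_fg, hle⟩ := exists_fg_le_range_map hH
  have : Algebra.FiniteType ℤ S := (Subalgebra.fg_iff_finiteType S).mp hS_fg
  have : IsReduced S := isReduced_of_injective S.val Subtype.val_injective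
  have : Group.ResiduallyFinite (GL ι S) := residuallyFinite_of_finiteType
  have hinj : Function.Injective (map (n := ι) (S.val : S →+* A)) :=
    Units.map_injective (Matrix.map_injective Subtype.val_injective)
  exact .of_injective ((MonoidHom.ofInjective hinj).symm.toMonoidHom.comp (Subgroup.inclusion hle))
    ((MonoidHom.ofInjective hinj).symm.injective.comp (Subgroup.inclusion_injective hle))

end Matrix.GeneralLinearGroup

/-- Every finitely generated subgroup of GL(n, ℂ) is residually finite. -/
theorem fg_subgroup_GL_residually_finite (n : ℕ)
    (H : Subgroup (GL (Fin n) ℂ)) (hfg : Group.FG H) :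
    ∀ g : H, g ≠ 1 →
      ∃ (F : Type) (_ : Group F) (_ : Finite F) (φ : H →* F), φ g ≠ 1 := by
  have := Matrix.GeneralLinearGroup.residuallyFinite_of_fg ((Group.fg_iff_subgroup_fg H).mp hfg)
  exact Group.ResiduallyFinite.exists_finite_monoidHom
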